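/- With ω and W as above, liminf_{|z|→∞} V(z) > 0, where V is the averaged potential. -/

import Mathlib

open MeasureTheory Metric Set Filter Topology
open scoped ENNReal NNReal RealInnerProductSpace

/-- `ω ⊂ ℝ^m` has Lipschitz boundary: near each boundary point, in a suitable orthonormal
splitting of `ℝ^m` into a unit direction `u` and its orthogonal complement, `ω` is the open
hypograph/epigraph of a Lipschitz function. -/
def LipschitzBoundary {m : ℕ} (ω : Set (EuclideanSpace ℝ (Fin m))) : Prop :=
  ∀ p ∈ frontier ω, ∃ u : EuclideanSpace ℝ (Fin m), ‖u‖ = 1 ∧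
    ∃ (φ : EuclideanSpace ℝ (Fin m) → ℝ) (K : ℝ≥0) (r : ℝ), 0 < r ∧ LipschitzWith K φ ∧
      ∀ x ∈ Metric.ball p r, (x ∈ ω ↔ φ (x - ⟪x, u⟫ • u) < ⟪x, u⟫)

/-- Membership in `H¹(ω, ℝ^N)` (encoded for an everywhere-defined representative via
differentiability on `ω` together with integrability of the map and of `|∇v|²`). -/
def MemH1 {m N : ℕ} (ω : Set (EuclideanSpace ℝ (Fin m)))
    (v : EuclideanSpace ℝ (Fin m) → EuclideanSpace ℝ (Fin N)) : Prop :=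
  DifferentiableOn ℝ v ω ∧ MeasureTheory.IntegrableOn v ω ∧
    (∫⁻ x in ω, (‖fderivWithin ℝ v ω x‖₊ : ℝ≥0∞) ^ 2) < ⊤

/-- The averaged energy `e(v) = ⨍_ω (|∇v|² + W(v))`. -/
noncomputable def eAvg {m N : ℕ} (W : EuclideanSpace ℝ (Fin N) → ℝ≥0∞)
    (ω : Set (EuclideanSpace ℝ (Fin m)))
    (v : EuclideanSpace ℝ (Fin m) → EuclideanSpace ℝ (Fin N)) : ℝ≥0∞ :=
  (volume ω)⁻¹ * ∫⁻ x in ω, ((‖fderivWithin ℝ v ω x‖₊ : ℝ≥0∞) ^ 2 + W (v x))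

/-- The averaged potential
`V(z) = inf { ⨍_ω (|∇v|² + W(v)) : v ∈ H¹(ω,ℝ^N), ⨍_ω v = z }`. -/
noncomputable def Vavg {m N : ℕ} (W : EuclideanSpace ℝ (Fin N) → ℝ≥0∞)
    (ω : Set (EuclideanSpace ℝ (Fin m))) (z : EuclideanSpace ℝ (Fin N)) : ℝ≥0∞ :=
  ⨅ v ∈ {v : EuclideanSpace ℝ (Fin m) → EuclideanSpace ℝ (Fin N) |
      MemH1 ω v ∧ (⨍ x in ω, v x) = z}, eAvg W ω v

/-!
On a bounded connected Lipschitz domain there is an L¹ Poincaré-type inequality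
`∫_ω |v| ≤ C₁ ∫_ω |∇v| + C₂ |⨍_{B(x₀,ρ)} v|`. Along segments, `v` differs from its averages over
`ρ`-balls, and averages over `ρ`-close balls differ from each other, by `O(ρ ∫_ω |∇v|)`; chaining
balls through a compact connected core of `ω` controls `v` on the core, and the boundary layer is
pushed into the core along the inward directions of the Lipschitz charts.

If the energy of `v` is small, then `∫_ω |∇v| ≤ ∫_ω (|∇v|² + 1)` is bounded, and by (H2) the set
where `|v| ≥ R` fills at most half of `B(x₀,ρ)`, which bounds the ball average. Hence `|⨍_ω v|`
is bounded, so `V(z)` stays above a fixed positive level once `|z|` is large.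
-/

theorem setLIntegral_comp_add_right_le {G : Type*} [AddGroup G] [MeasurableSpace G]
    [MeasurableAdd G] {μ : Measure G} [μ.IsAddRightInvariant] {S U : Set G} {c : G}
    (hS : MeasurableSet S) (hU : MeasurableSet U) (hSU : ∀ w ∈ S, w + c ∈ U) (g : G → ℝ≥0∞) :
    ∫⁻ w in S, g (w + c) ∂μ ≤ ∫⁻ y in U, g y ∂μ :=
  calc ∫⁻ w in S, g (w + c) ∂μ = ∫⁻ w in S, U.indicator g (w + c) ∂μ :=
        setLIntegral_congr_fun hS fun w hw => (indicator_of_mem (hSU w hw) g).symm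
    _ ≤ ∫⁻ w, U.indicator g (w + c) ∂μ := setLIntegral_le_lintegral _ _
    _ = ∫⁻ y in U, g y ∂μ := by rw [lintegral_add_right_eq_self, lintegral_indicator hU]

theorem lintegral_biUnion_finset_le {α ι : Type*} [MeasurableSpace α] {μ : Measure α}
    (s : Finset ι) (B : ι → Set α) (f : α → ℝ≥0∞) :
    ∫⁻ x in ⋃ i ∈ s, B i, f x ∂μ ≤ ∑ i ∈ s, ∫⁻ x in B i, f x ∂μ := by
  classical
  induction s using Finset.induction with
  | empty => simp
  | insert a s h ih =>
    rw [Finset.set_biUnion_insert, Finset.sum_insert h]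
    exact (lintegral_union_le _ _ _).trans (add_le_add le_rfl ih)

section Averages

variable {α F : Type*} [MeasurableSpace α] {μ : Measure α}

theorem setLIntegral_le_setLIntegral_sq_add (s : Set α) (f g : α → ℝ≥0∞) :
    ∫⁻ x in s, f x ∂μ ≤ ∫⁻ x in s, (f x ^ 2 + g x) ∂μ + μ s := by
  calc ∫⁻ x in s, f x ∂μ ≤ ∫⁻ x in s, (f x ^ 2 + g x) + 1 ∂μ := by
        refine lintegral_mono fun x => ?_
        rcases le_total (f x) 1 with h | h
        · exact h.trans le_add_self
        · calc f x ≤ f x ^ 2 := by rw [sq]; exact le_mul_of_one_le_left (by positivity) h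
            _ ≤ _ := le_self_add.trans le_self_add
    _ = ∫⁻ x in s, (f x ^ 2 + g x) ∂μ + μ s := by
        rw [lintegral_add_right _ measurable_const, setLIntegral_one]

variable [NormedAddCommGroup F] [NormedSpace ℝ F]

theorem enorm_setAverage_le (f : α → F) (s : Set α) :
    ‖⨍ x in s, f x ∂μ‖ₑ ≤ (μ s)⁻¹ * ∫⁻ x in s, ‖f x‖ₑ ∂μ := by
  rw [setAverage_eq, enorm_smul, measureReal_def, ← ENNReal.toReal_inv]
  gcongr
  · rw [Real.enorm_of_nonneg ENNReal.toReal_nonneg]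
    exact ENNReal.ofReal_toReal_le
  · exact enorm_integral_le_lintegral_enorm _

theorem enorm_setAverage_sub_setAverage_le {f g : α → F} {s : Set α}
    (hf : IntegrableOn f s μ) (hg : IntegrableOn g s μ) :
    ‖(⨍ x in s, f x ∂μ) - ⨍ x in s, g x ∂μ‖ₑ ≤ (μ s)⁻¹ * ∫⁻ x in s, ‖f x - g x‖ₑ ∂μ := by
  rw [setAverage_eq, setAverage_eq, ← smul_sub, ← integral_sub hf hg, ← setAverage_eq]
  exact enorm_setAverage_le _ _

end Averages

section Segments

variable {E F : Type*} [NormedAddCommGroup E] [NormedSpace ℝ E]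
  [NormedAddCommGroup F] [NormedSpace ℝ F] [CompleteSpace F]

theorem add_smul_mem_ball {x h : E} {ρ t : ℝ} (hh : ‖h‖ < ρ) (ht : t ∈ Icc (0 : ℝ) 1) :
    x + t • h ∈ ball x ρ :=
  (convex_ball x ρ).add_smul_mem (mem_ball_self ((norm_nonneg h).trans_lt hh))
    (by simpa [dist_eq_norm] using hh) ht

theorem enorm_sub_le_lintegral_enorm_deriv {f : ℝ → F} {a b : ℝ} (hab : a ≤ b)
    (hf : ∀ t ∈ Icc a b, DifferentiableAt ℝ f t) :
    ‖f b - f a‖ₑ ≤ ∫⁻ t in Icc a b, ‖deriv f t‖ₑ := by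
  by_cases hfin : ∫⁻ t in Icc a b, ‖deriv f t‖ₑ = ⊤
  · simp [hfin]
  have hint : IntegrableOn (deriv f) (Icc a b) :=
    ⟨aestronglyMeasurable_deriv f _, Ne.lt_top hfin⟩
  rw [← intervalIntegral.integral_eq_sub_of_hasDerivAt
      (fun t ht => (hf t (uIcc_of_le hab ▸ ht)).hasDerivAt)
      ((intervalIntegrable_iff_integrableOn_Icc_of_le hab).2 hint),
    intervalIntegral.integral_of_le hab, ← integral_Icc_eq_integral_Ioc]
  exact enorm_integral_le_lintegral_enorm _

theorem enorm_sub_le_lintegral_enorm_fderiv_segment {v : E → F} {x b : E}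
    (hv : ∀ t ∈ Icc (0 : ℝ) 1, DifferentiableAt ℝ v (x + t • b)) :
    ‖v (x + b) - v x‖ₑ ≤ ‖b‖ₑ * ∫⁻ t in Icc (0 : ℝ) 1, ‖fderiv ℝ v (x + t • b)‖ₑ := by
  have hline : ∀ t : ℝ, HasDerivAt (fun s : ℝ => x + s • b) b t := fun t => by
    simpa using ((hasDerivAt_id t).smul_const b).const_add x
  have hderiv : ∀ t ∈ Icc (0 : ℝ) 1,
      HasDerivAt (fun s => v (x + s • b)) (fderiv ℝ v (x + t • b) b) t :=
    fun t ht => (hv t ht).hasFDerivAt.comp_hasDerivAt t (hline t)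
  calc ‖v (x + b) - v x‖ₑ = ‖v (x + (1 : ℝ) • b) - v (x + (0 : ℝ) • b)‖ₑ := by simp
    _ ≤ ∫⁻ t in Icc (0 : ℝ) 1, ‖deriv (fun s => v (x + s • b)) t‖ₑ :=
      enorm_sub_le_lintegral_enorm_deriv zero_le_one fun t ht => (hderiv t ht).differentiableAt
    _ ≤ ∫⁻ t in Icc (0 : ℝ) 1, ‖fderiv ℝ v (x + t • b)‖ₑ * ‖b‖ₑ := by
      refine setLIntegral_mono' measurableSet_Icc fun t ht => ?_
      rw [(hderiv t ht).deriv]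
      exact ContinuousLinearMap.le_opENorm _ _
    _ = ‖b‖ₑ * ∫⁻ t in Icc (0 : ℝ) 1, ‖fderiv ℝ v (x + t • b)‖ₑ := by
      rw [lintegral_mul_const' _ _ enorm_ne_top, mul_comm]

variable [FiniteDimensional ℝ E] [MeasurableSpace E] [BorelSpace E]
  {μ : Measure E} [μ.IsAddHaarMeasure] {U : Set E} {v : E → F}

theorem setLIntegral_enorm_comp_add_sub_le {S : Set E} (hU : IsOpen U) (hS : MeasurableSet S)
    (hv : DifferentiableOn ℝ v U) {b : E}
    (hseg : ∀ w ∈ S, ∀ t ∈ Icc (0 : ℝ) 1, w + t • b ∈ U) :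
    ∫⁻ w in S, ‖v (w + b) - v w‖ₑ ∂μ ≤ ‖b‖ₑ * ∫⁻ x in U, ‖fderiv ℝ v x‖ₑ ∂μ := by
  have hmeas : Measurable fun p : E × ℝ => ‖fderiv ℝ v (p.1 + p.2 • b)‖ₑ :=
    (measurable_fderiv ℝ v).enorm.comp (by fun_prop)
  calc ∫⁻ w in S, ‖v (w + b) - v w‖ₑ ∂μ
      ≤ ∫⁻ w in S, ‖b‖ₑ * (∫⁻ t in Icc (0 : ℝ) 1, ‖fderiv ℝ v (w + t • b)‖ₑ) ∂μ :=
        setLIntegral_mono' hS fun w hw => enorm_sub_le_lintegral_enorm_fderiv_segment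
          fun t ht => hv.differentiableAt (hU.mem_nhds (hseg w hw t ht))
    _ = ‖b‖ₑ * ∫⁻ t in Icc (0 : ℝ) 1, ∫⁻ w in S, ‖fderiv ℝ v (w + t • b)‖ₑ ∂μ := by
        rw [lintegral_const_mul' _ _ enorm_ne_top, lintegral_lintegral_swap hmeas.aemeasurable]
    _ ≤ ‖b‖ₑ * ∫⁻ t in Icc (0 : ℝ) 1, ∫⁻ x in U, ‖fderiv ℝ v x‖ₑ ∂μ := by
        refine mul_le_mul_right (setLIntegral_mono' measurableSet_Icc fun t ht => ?_) _
        exact setLIntegral_comp_add_right_le (μ := μ) hS hU.measurableSet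
          (fun w hw => hseg w hw t ht) _
    _ = ‖b‖ₑ * ∫⁻ x in U, ‖fderiv ℝ v x‖ₑ ∂μ := by simp

theorem setLIntegral_enorm_le_of_add_mem (hU : IsOpen U) (hv : DifferentiableOn ℝ v U)
    (hvm : StronglyMeasurable v) {S K : Set E} (hS : MeasurableSet S) (hK : MeasurableSet K)
    {b : E} (hseg : ∀ w ∈ S, ∀ t ∈ Icc (0 : ℝ) 1, w + t • b ∈ U) (hSK : ∀ w ∈ S, w + b ∈ K) :
    ∫⁻ x in S, ‖v x‖ₑ ∂μ
      ≤ ‖b‖ₑ * ∫⁻ x in U, ‖fderiv ℝ v x‖ₑ ∂μ + ∫⁻ x in K, ‖v x‖ₑ ∂μ :=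
  calc ∫⁻ x in S, ‖v x‖ₑ ∂μ ≤ ∫⁻ x in S, ‖v (x + b) - v x‖ₑ + ‖v (x + b)‖ₑ ∂μ := by
        refine lintegral_mono fun x => ?_
        rw [add_comm]
        calc ‖v x‖ₑ = ‖v (x + b) - (v (x + b) - v x)‖ₑ := by rw [sub_sub_cancel]
          _ ≤ _ := enorm_sub_le
    _ = ∫⁻ x in S, ‖v (x + b) - v x‖ₑ ∂μ + ∫⁻ x in S, ‖v (x + b)‖ₑ ∂μ :=
        lintegral_add_right _ (hvm.comp_measurable (measurable_id.add_const b)).enorm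
    _ ≤ _ := add_le_add (setLIntegral_enorm_comp_add_sub_le hU hS hv hseg)
        (setLIntegral_comp_add_right_le hS hK hSK _)

theorem setLIntegral_enorm_le_of_subset_union {ι : Type*} (hU : IsOpen U)
    (hv : DifferentiableOn ℝ v U) (hvm : StronglyMeasurable v) {K : Set E}
    (hK : MeasurableSet K) {t : Finset ι} {S : ι → Set E} {b : ι → E}
    (hS : ∀ i ∈ t, MeasurableSet (S i)) (hUK : U ⊆ K ∪ ⋃ i ∈ t, S i)
    (hseg : ∀ i ∈ t, ∀ w ∈ S i, ∀ s ∈ Icc (0 : ℝ) 1, w + s • b i ∈ U)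
    (hSK : ∀ i ∈ t, ∀ w ∈ S i, w + b i ∈ K) :
    ∫⁻ x in U, ‖v x‖ₑ ∂μ
      ≤ (∑ i ∈ t, ‖b i‖ₑ) * ∫⁻ x in U, ‖fderiv ℝ v x‖ₑ ∂μ
        + (t.card + 1) * ∫⁻ x in K, ‖v x‖ₑ ∂μ :=
  calc ∫⁻ x in U, ‖v x‖ₑ ∂μ ≤ ∫⁻ x in K, ‖v x‖ₑ ∂μ + ∑ i ∈ t, ∫⁻ x in S i, ‖v x‖ₑ ∂μ :=
        (lintegral_mono_set hUK).trans <|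
          (lintegral_union_le _ _ _).trans (add_le_add le_rfl (lintegral_biUnion_finset_le _ _ _))
    _ ≤ ∫⁻ x in K, ‖v x‖ₑ ∂μ + ∑ i ∈ t, (‖b i‖ₑ * ∫⁻ x in U, ‖fderiv ℝ v x‖ₑ ∂μ
          + ∫⁻ x in K, ‖v x‖ₑ ∂μ) :=
        add_le_add le_rfl <| Finset.sum_le_sum fun i hi =>
          setLIntegral_enorm_le_of_add_mem hU hv hvm (hS i hi) hK (hseg i hi) (hSK i hi)
    _ = _ := by
        rw [Finset.sum_add_distrib, ← Finset.sum_mul, Finset.sum_const, nsmul_eq_mul]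
        ring

end Segments

theorem IsPreconnected.exists_nat_forall_edist_le {X Y ι : Type*} [PseudoMetricSpace X]
    [PseudoEMetricSpace Y] {P : Set X} (hP : IsPreconnected P) {ρ : ℝ} (hρ : 0 < ρ)
    (f : ι → X → Y) (B : ι → ℝ≥0∞)
    (hf : ∀ i, ∀ x ∈ P, ∀ y ∈ P, dist y x < ρ → edist (f i y) (f i x) ≤ B i)
    {x y : X} (hx : x ∈ P) (hy : y ∈ P) : ∃ n : ℕ, ∀ i, edist (f i y) (f i x) ≤ n * B i := by
  refine hP.induction₂ (fun x y => ∃ n : ℕ, ∀ i, edist (f i y) (f i x) ≤ n * B i)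
    (fun x hx => ?_) (fun x y z _ _ _ ⟨n, hn⟩ ⟨k, hk⟩ => ⟨n + k, fun i => ?_⟩)
    (fun x y _ _ ⟨n, hn⟩ => ⟨n, fun i => edist_comm (f i x) (f i y) ▸ hn i⟩) hx hy
  · filter_upwards [self_mem_nhdsWithin, nhdsWithin_le_nhds (ball_mem_nhds x hρ)] with y hyP hyx
    exact ⟨1, fun i => by simpa using hf i x hx y hyP hyx⟩
  · calc edist (f i z) (f i x) ≤ edist (f i z) (f i y) + edist (f i y) (f i x) :=
          edist_triangle _ _ _
      _ ≤ k * B i + n * B i := add_le_add (hk i) (hn i)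
      _ = ↑(n + k) * B i := by push_cast; ring

theorem IsOpen.exists_isCompact_isPreconnected_superset {E : Type*} [NormedAddCommGroup E]
    [NormedSpace ℝ E] [FiniteDimensional ℝ E] {U K : Set E} (hU : IsOpen U)
    (hUc : IsConnected U) (hK : IsCompact K) (hKU : K ⊆ U) {x₀ : E} (hx₀ : x₀ ∈ U) :
    ∃ P, IsCompact P ∧ IsPreconnected P ∧ K ⊆ P ∧ P ⊆ U ∧ x₀ ∈ P := by
  have hpc : IsPathConnected U := hU.isConnected_iff_isPathConnected.1 hUc
  have hjoin : ∀ q ∈ U, ∃ C : Set E, IsCompact C ∧ IsPreconnected C ∧ x₀ ∈ C ∧ q ∈ C ∧ C ⊆ U :=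
    fun q hq => by
      let γ := (hpc.joinedIn x₀ hx₀ q hq).somePath
      exact ⟨range γ, isCompact_range γ.continuous, isPreconnected_range γ.continuous,
        ⟨0, γ.source⟩, ⟨1, γ.target⟩,
        range_subset_iff.2 (hpc.joinedIn x₀ hx₀ q hq).somePath_mem⟩
  choose! C hCc hCp hx₀C hqC hCU using hjoin
  choose! δ hδ hδU using Metric.isOpen_iff.1 hU
  obtain ⟨t, htK, hKt⟩ := hK.elim_nhds_subcover (fun q => ball q (δ q / 2))
    fun q hq => ball_mem_nhds q (half_pos (hδ q (hKU hq)))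
  have ht : ∀ q ∈ t, q ∈ U := fun q hq => hKU (htK q hq)
  refine ⟨insert x₀ (⋃ q ∈ t, closedBall q (δ q / 2) ∪ C q), ?_, ?_, ?_, ?_, mem_insert _ _⟩
  · exact (t.isCompact_biUnion fun q hq =>
      (isCompact_closedBall _ _).union (hCc q (ht q hq))).insert x₀
  · refine isPreconnected_of_forall x₀ fun y hy => ?_
    rcases hy with rfl | hy
    · exact ⟨{y}, singleton_subset_iff.2 (mem_insert _ _), rfl, rfl, isPreconnected_singleton⟩
    obtain ⟨q, hq, hyq⟩ := mem_iUnion₂.1 hy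
    refine ⟨closedBall q (δ q / 2) ∪ C q,
      fun z hz => mem_insert_of_mem _ (mem_iUnion₂.2 ⟨q, hq, hz⟩),
      Or.inr (hx₀C q (ht q hq)), hyq, ?_⟩
    exact (convex_closedBall _ _).isPreconnected.union q
      (mem_closedBall_self (half_pos (hδ q (ht q hq))).le) (hqC q (ht q hq)) (hCp q (ht q hq))
  · exact fun x hx => mem_insert_of_mem _ <| biUnion_mono subset_rfl
      (fun q _ => ball_subset_closedBall.trans subset_union_left) (hKt hx)
  · refine insert_subset hx₀ (iUnion₂_subset fun q hq => union_subset ?_ (hCU q (ht q hq)))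
    exact (closedBall_subset_ball (half_lt_self (hδ q (ht q hq)))).trans (hδU q (ht q hq))

theorem preimage_add_right_ball_add {E : Type*} [SeminormedAddCommGroup E] (x b : E) (ρ : ℝ) :
    (· + b) ⁻¹' ball (x + b) ρ = ball x ρ := by
  rw [preimage_add_right_ball, add_sub_cancel_right]

section BallAverage

variable {E F : Type*} [NormedAddCommGroup E] [MeasurableSpace E] [BorelSpace E]
  {μ : Measure E} [μ.IsAddHaarMeasure] [NormedAddCommGroup F]

theorem integrableOn_ball_comp_add {v : E → F} {ρ : ℝ} {x b : E}
    (hv : IntegrableOn v (ball (x + b) ρ) μ) : IntegrableOn (fun w => v (w + b)) (ball x ρ) μ := by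
  rw [← preimage_add_right_ball_add x b ρ]
  exact ((measurePreserving_add_right μ b).integrableOn_comp_preimage
    (measurableEmbedding_addRight b)).2 hv

variable [NormedSpace ℝ F]

noncomputable def ballAverage (μ : Measure E) (v : E → F) (ρ : ℝ) (x : E) : F :=
  ⨍ y in ball x ρ, v y ∂μ

theorem ballAverage_add (v : E → F) (ρ : ℝ) (x b : E) :
    ballAverage μ v ρ (x + b) = ⨍ w in ball x ρ, v (w + b) ∂μ := by
  rw [ballAverage, setAverage_eq, setAverage_eq, measureReal_def, measureReal_def,
    Measure.addHaar_ball_center μ (x + b), Measure.addHaar_ball_center μ x,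
    ← preimage_add_right_ball_add x b ρ,
    (measurePreserving_add_right μ b).setIntegral_preimage_emb
      (measurableEmbedding_addRight b)]

variable [NormedSpace ℝ E] [FiniteDimensional ℝ E] [CompleteSpace F]
  {U : Set E} {v : E → F} {ρ : ℝ}

theorem enorm_sub_ballAverage_le (hρ : 0 < ρ) {x : E} (hv : IntegrableOn v (ball x ρ) μ) :
    ‖v x - ballAverage μ v ρ x‖ₑ
      ≤ (μ (ball 0 ρ))⁻¹ * ∫⁻ h in ball 0 ρ, ‖v (x + h) - v x‖ₑ ∂μ := by
  have hx : ballAverage μ v ρ x = ⨍ h in ball 0 ρ, v (h + x) ∂μ := by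
    simpa using ballAverage_add (μ := μ) v ρ 0 x
  calc ‖v x - ballAverage μ v ρ x‖ₑ
      = ‖(⨍ _ in ball 0 ρ, v x ∂μ) - ⨍ h in ball 0 ρ, v (h + x) ∂μ‖ₑ := by
        rw [hx, setAverage_const (measure_ball_pos μ 0 hρ).ne' measure_ball_lt_top.ne]
    _ ≤ (μ (ball 0 ρ))⁻¹ * ∫⁻ h in ball 0 ρ, ‖v x - v (h + x)‖ₑ ∂μ :=
        enorm_setAverage_sub_setAverage_le (integrableOn_const measure_ball_lt_top.ne)
          (integrableOn_ball_comp_add (by simpa using hv))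
    _ = (μ (ball 0 ρ))⁻¹ * ∫⁻ h in ball 0 ρ, ‖v (x + h) - v x‖ₑ ∂μ := by
        simp_rw [enorm_sub_rev (v x), add_comm _ x]

theorem setLIntegral_enorm_sub_ballAverage_le (hU : IsOpen U) (hv : DifferentiableOn ℝ v U)
    (hvm : StronglyMeasurable v) (hvi : IntegrableOn v U μ) (hρ : 0 < ρ) {S : Set E}
    (hS : MeasurableSet S) (hSU : ∀ w ∈ S, ball w ρ ⊆ U) :
    ∫⁻ w in S, ‖v w - ballAverage μ v ρ w‖ₑ ∂μ
      ≤ ENNReal.ofReal ρ * ∫⁻ x in U, ‖fderiv ℝ v x‖ₑ ∂μ := by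
  set G := ∫⁻ x in U, ‖fderiv ℝ v x‖ₑ ∂μ
  have hB0 : μ (ball 0 ρ) ≠ 0 := (measure_ball_pos μ 0 hρ).ne'
  have hmeas : Measurable fun p : E × E => ‖v (p.1 + p.2) - v p.1‖ₑ :=
    ((hvm.comp_measurable measurable_add).sub (hvm.comp_measurable measurable_fst)).enorm
  calc ∫⁻ w in S, ‖v w - ballAverage μ v ρ w‖ₑ ∂μ
      ≤ ∫⁻ w in S, (μ (ball 0 ρ))⁻¹ * ∫⁻ h in ball 0 ρ, ‖v (w + h) - v w‖ₑ ∂μ ∂μ :=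
        setLIntegral_mono' hS fun w hw => enorm_sub_ballAverage_le hρ (hvi.mono_set (hSU w hw))
    _ = (μ (ball 0 ρ))⁻¹ * ∫⁻ h in ball 0 ρ, ∫⁻ w in S, ‖v (w + h) - v w‖ₑ ∂μ ∂μ := by
        rw [lintegral_const_mul' _ _ (ENNReal.inv_ne_top.2 hB0),
          lintegral_lintegral_swap hmeas.aemeasurable]
    _ ≤ (μ (ball 0 ρ))⁻¹ * ∫⁻ _ in ball 0 ρ, ENNReal.ofReal ρ * G ∂μ := by
        refine mul_le_mul_right (setLIntegral_mono' measurableSet_ball fun h hh => ?_) _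
        have hh : ‖h‖ < ρ := mem_ball_zero_iff.1 hh
        refine (setLIntegral_enorm_comp_add_sub_le hU hS hv fun w hw t ht =>
          hSU w hw (add_smul_mem_ball hh ht)).trans (mul_le_mul_left ?_ _)
        rw [← ofReal_norm]
        exact ENNReal.ofReal_le_ofReal hh.le
    _ = ENNReal.ofReal ρ * G := by
        rw [setLIntegral_const, mul_comm, mul_assoc,
          ENNReal.mul_inv_cancel hB0 measure_ball_lt_top.ne, mul_one]

theorem enorm_ballAverage_sub_ballAverage_le (hU : IsOpen U) (hv : DifferentiableOn ℝ v U)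
    (hvi : IntegrableOn v U μ) {x y : E} (hx : ball x (2 * ρ) ⊆ U) (hxy : dist y x < ρ) :
    ‖ballAverage μ v ρ y - ballAverage μ v ρ x‖ₑ
      ≤ (μ (ball 0 ρ))⁻¹ * (ENNReal.ofReal ρ * ∫⁻ x in U, ‖fderiv ℝ v x‖ₑ ∂μ) := by
  obtain ⟨b, rfl⟩ : ∃ b, y = x + b := ⟨y - x, by abel⟩
  have hb : ‖b‖ < ρ := by simpa [dist_eq_norm] using hxy
  have hρ : 0 < ρ := (norm_nonneg b).trans_lt hb
  have hxρ : ball x ρ ⊆ U := (ball_subset_ball (by linarith)).trans hx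
  have hseg : ∀ w ∈ ball x ρ, ∀ t ∈ Icc (0 : ℝ) 1, w + t • b ∈ U := by
    intro w hw t ht
    refine hx ((convex_ball x (2 * ρ)).add_smul_mem ?_ ?_ ht)
    · exact ball_subset_ball (by linarith) hw
    · rw [mem_ball] at hw ⊢
      calc dist (w + b) x ≤ dist w x + ‖b‖ := by
            rw [dist_eq_norm, dist_eq_norm, add_sub_right_comm]; exact norm_add_le _ _
        _ < 2 * ρ := by linarith
  have hvi' : IntegrableOn (fun w => v (w + b)) (ball x ρ) μ :=
    integrableOn_ball_comp_add (hvi.mono_set ((ball_subset_ball' (by linarith)).trans hx))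
  rw [ballAverage_add, ballAverage, ← Measure.addHaar_ball_center μ x]
  refine (enorm_setAverage_sub_setAverage_le hvi' (hvi.mono_set hxρ)).trans ?_
  gcongr
  refine (setLIntegral_enorm_comp_add_sub_le hU measurableSet_ball hv hseg).trans ?_
  gcongr
  rw [← ofReal_norm]
  exact ENNReal.ofReal_le_ofReal hb.le

theorem setLIntegral_ball_enorm_le (hU : IsOpen U) (hv : DifferentiableOn ℝ v U)
    (hvm : StronglyMeasurable v) (hvi : IntegrableOn v U μ) (hρ : 0 < ρ) {x : E}
    (hx : ball x (2 * ρ) ⊆ U) :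
    ∫⁻ w in ball x ρ, ‖v w‖ₑ ∂μ
      ≤ 2 * (ENNReal.ofReal ρ * ∫⁻ x in U, ‖fderiv ℝ v x‖ₑ ∂μ)
        + μ (ball 0 ρ) * ‖ballAverage μ v ρ x‖ₑ := by
  set D := ENNReal.ofReal ρ * ∫⁻ x in U, ‖fderiv ℝ v x‖ₑ ∂μ
  set a := ballAverage μ v ρ
  have hB0 : μ (ball 0 ρ) ≠ 0 := (measure_ball_pos μ 0 hρ).ne'
  have hpt : ∀ w ∈ ball x ρ, ‖v w‖ₑ ≤ ‖v w - a w‖ₑ + ((μ (ball 0 ρ))⁻¹ * D + ‖a x‖ₑ) := by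
    intro w hw
    calc ‖v w‖ₑ = ‖(v w - a w) + ((a w - a x) + a x)‖ₑ := by rw [sub_add_cancel, sub_add_cancel]
      _ ≤ ‖v w - a w‖ₑ + (‖a w - a x‖ₑ + ‖a x‖ₑ) :=
          (enorm_add_le _ _).trans (add_le_add le_rfl (enorm_add_le _ _))
      _ ≤ _ := by
          gcongr
          exact enorm_ballAverage_sub_ballAverage_le hU hv hvi hx hw
  have hdev : ∫⁻ w in ball x ρ, ‖v w - a w‖ₑ ∂μ ≤ D :=
    setLIntegral_enorm_sub_ballAverage_le hU hv hvm hvi hρ measurableSet_ball fun w hw =>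
      (ball_subset_ball' (by rw [mem_ball] at hw; linarith)).trans hx
  calc ∫⁻ w in ball x ρ, ‖v w‖ₑ ∂μ
      ≤ ∫⁻ w in ball x ρ, ‖v w - a w‖ₑ + ((μ (ball 0 ρ))⁻¹ * D + ‖a x‖ₑ) ∂μ :=
        setLIntegral_mono' measurableSet_ball hpt
    _ ≤ D + ((μ (ball 0 ρ))⁻¹ * D + ‖a x‖ₑ) * μ (ball 0 ρ) := by
        rw [lintegral_add_right _ measurable_const, setLIntegral_const,
          Measure.addHaar_ball_center μ x]
        gcongr
    _ = 2 * D + μ (ball 0 ρ) * ‖a x‖ₑ := by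
        rw [add_mul, mul_comm _ (μ (ball 0 ρ)), ← mul_assoc,
          ENNReal.mul_inv_cancel hB0 measure_ball_lt_top.ne]
        ring

theorem enorm_ballAverage_le_of_forall_enorm_le (hU : IsOpen U) (hv : DifferentiableOn ℝ v U)
    (hvm : StronglyMeasurable v) (hvi : IntegrableOn v U μ) (hρ : 0 < ρ) {x₀ : E}
    (hx₀ : ball x₀ (2 * ρ) ⊆ U) {s : Set E} (hs : MeasurableSet s) (hsx₀ : s ⊆ ball x₀ ρ)
    (hs0 : μ s ≠ 0) {R : ℝ≥0∞} (hR : ∀ x ∈ s, ‖v x‖ₑ ≤ R) :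
    ‖ballAverage μ v ρ x₀‖ₑ
      ≤ R + ((μ (ball 0 ρ))⁻¹ + (μ s)⁻¹) * (ENNReal.ofReal ρ * ∫⁻ x in U, ‖fderiv ℝ v x‖ₑ ∂μ) := by
  set D := ENNReal.ofReal ρ * ∫⁻ x in U, ‖fderiv ℝ v x‖ₑ ∂μ
  set a := ballAverage μ v ρ
  have hstop : μ s ≠ ⊤ := ((measure_mono hsx₀).trans_lt measure_ball_lt_top).ne
  have hpt : ∀ x ∈ s, ‖a x₀‖ₑ ≤ ‖v x - a x‖ₑ + (R + (μ (ball 0 ρ))⁻¹ * D) := by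
    intro x hx
    calc ‖a x₀‖ₑ = ‖(v x - (a x - a x₀)) - (v x - a x)‖ₑ := by
          congr 1; abel
      _ ≤ ‖v x - a x‖ₑ + (‖v x‖ₑ + ‖a x - a x₀‖ₑ) := by
          rw [add_comm]
          exact enorm_sub_le.trans (add_le_add enorm_sub_le le_rfl)
      _ ≤ _ := by
          gcongr
          · exact hR x hx
          · exact enorm_ballAverage_sub_ballAverage_le hU hv hvi hx₀ (hsx₀ hx)
  have hdev : ∫⁻ x in s, ‖v x - a x‖ₑ ∂μ ≤ D :=
    setLIntegral_enorm_sub_ballAverage_le hU hv hvm hvi hρ hs fun w hw =>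
      (ball_subset_ball' (by linarith [mem_ball.1 (hsx₀ hw)])).trans hx₀
  have hint : μ s * ‖a x₀‖ₑ ≤ D + μ s * (R + (μ (ball 0 ρ))⁻¹ * D) :=
    calc μ s * ‖a x₀‖ₑ = ∫⁻ _ in s, ‖a x₀‖ₑ ∂μ := by rw [setLIntegral_const, mul_comm]
      _ ≤ ∫⁻ x in s, ‖v x - a x‖ₑ + (R + (μ (ball 0 ρ))⁻¹ * D) ∂μ := setLIntegral_mono' hs hpt
      _ ≤ D + μ s * (R + (μ (ball 0 ρ))⁻¹ * D) := by
          rw [lintegral_add_right _ measurable_const, setLIntegral_const, mul_comm _ (μ s)]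
          gcongr
  calc ‖a x₀‖ₑ = (μ s)⁻¹ * (μ s * ‖a x₀‖ₑ) := (ENNReal.inv_mul_cancel_left hs0 hstop).symm
    _ ≤ (μ s)⁻¹ * (D + μ s * (R + (μ (ball 0 ρ))⁻¹ * D)) := by gcongr
    _ = R + ((μ (ball 0 ρ))⁻¹ + (μ s)⁻¹) * D := by
        rw [mul_add, ENNReal.inv_mul_cancel_left hs0 hstop]
        ring

theorem enorm_ballAverage_le_of_lintegral_lt (hU : IsOpen U) (hv : DifferentiableOn ℝ v U)
    (hvm : StronglyMeasurable v) (hvi : IntegrableOn v U μ) (hρ : 0 < ρ) {x₀ : E}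
    (hx₀ : ball x₀ (2 * ρ) ⊆ U) {W : F → ℝ≥0∞} {c : ℝ≥0∞} (hc0 : c ≠ 0) (hc : c ≠ ⊤) {R : ℝ}
    (hW : ∀ z, R ≤ ‖z‖ → c ≤ W z)
    (hWv : ∫⁻ x in ball x₀ ρ, W (v x) ∂μ < c * (μ (ball x₀ ρ) / 2)) :
    ‖ballAverage μ v ρ x₀‖ₑ ≤ ENNReal.ofReal R + ((μ (ball 0 ρ))⁻¹ + (μ (ball x₀ ρ) / 2)⁻¹)
      * (ENNReal.ofReal ρ * ∫⁻ x in U, ‖fderiv ℝ v x‖ₑ ∂μ) := by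
  set B := ball x₀ ρ
  set bad := {x | R ≤ ‖v x‖}
  have hbadm : MeasurableSet bad := measurableSet_le measurable_const hvm.norm.measurable
  have hbad : μ (B ∩ bad) < μ B / 2 := by
    refine (ENNReal.mul_lt_mul_iff_right hc0 hc).1 (lt_of_le_of_lt ?_ hWv)
    calc c * μ (B ∩ bad) = ∫⁻ _ in B ∩ bad, c ∂μ := by rw [setLIntegral_const, mul_comm]
      _ ≤ ∫⁻ x in B ∩ bad, W (v x) ∂μ :=
          setLIntegral_mono' (measurableSet_ball.inter hbadm) fun x hx => hW _ hx.2
      _ ≤ ∫⁻ x in B, W (v x) ∂μ := lintegral_mono_set inter_subset_left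
  have hgood : μ B / 2 ≤ μ (B \ bad) :=
    calc μ B / 2 = μ B - μ B / 2 := (ENNReal.sub_half measure_ball_lt_top.ne).symm
      _ ≤ μ B - μ (B ∩ bad) := tsub_le_tsub_left hbad.le _
      _ ≤ μ (B \ bad) := le_measure_sdiff.trans_eq (by rw [sdiff_self_inter])
  have hB2 : μ B / 2 ≠ 0 := ENNReal.div_ne_zero.2 ⟨(measure_ball_pos μ x₀ hρ).ne', by simp⟩
  refine (enorm_ballAverage_le_of_forall_enorm_le hU hv hvm hvi hρ hx₀
    (measurableSet_ball.diff hbadm) sdiff_subset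
    (pos_iff_ne_zero.1 ((pos_iff_ne_zero.2 hB2).trans_le hgood))
    fun x hx => ?_).trans (by gcongr)
  rw [← ofReal_norm]
  exact ENNReal.ofReal_le_ofReal (not_le.1 hx.2).le

theorem IsPreconnected.exists_nat_forall_enorm_ballAverage_sub_le (hU : IsOpen U) {P : Set E}
    (hPp : IsPreconnected P) (hρ : 0 < ρ) (hPU : ∀ x ∈ P, ball x (2 * ρ) ⊆ U) {x y : E}
    (hx : x ∈ P) (hy : y ∈ P) :
    ∃ n : ℕ, ∀ v : E → F, DifferentiableOn ℝ v U → IntegrableOn v U μ →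
      ‖ballAverage μ v ρ y - ballAverage μ v ρ x‖ₑ
        ≤ n * ((μ (ball 0 ρ))⁻¹ * (ENNReal.ofReal ρ * ∫⁻ x in U, ‖fderiv ℝ v x‖ₑ ∂μ)) := by
  obtain ⟨n, hn⟩ := hPp.exists_nat_forall_edist_le hρ
    (fun v : {v : E → F // DifferentiableOn ℝ v U ∧ IntegrableOn v U μ} => ballAverage μ v.1 ρ)
    _ (fun v x hx y _ hyx => by
      simpa only [edist_eq_enorm_sub] using
        enorm_ballAverage_sub_ballAverage_le hU v.2.1 v.2.2 (hPU x hx) hyx) hx hy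
  exact ⟨n, fun v hv hvi => by simpa only [edist_eq_enorm_sub] using hn ⟨v, hv, hvi⟩⟩

theorem exists_setLIntegral_enorm_le_of_isPreconnected (hU : IsOpen U) {P : Set E}
    (hPc : IsCompact P) (hPp : IsPreconnected P) (hρ : 0 < ρ)
    (hPU : ∀ x ∈ P, ball x (2 * ρ) ⊆ U) {x₀ : E} (hx₀ : x₀ ∈ P) :
    ∃ C₁ C₂ : ℝ≥0, ∀ v : E → F, DifferentiableOn ℝ v U → StronglyMeasurable v →
      IntegrableOn v U μ → ∫⁻ x in P, ‖v x‖ₑ ∂μ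
        ≤ C₁ * ∫⁻ x in U, ‖fderiv ℝ v x‖ₑ ∂μ + C₂ * ‖ballAverage μ v ρ x₀‖ₑ := by
  obtain ⟨t, htP, hPt⟩ := hPc.elim_nhds_subcover (ball · ρ) fun x _ => ball_mem_nhds x hρ
  choose! n hn using fun j (hj : j ∈ t) =>
    hPp.exists_nat_forall_enorm_ballAverage_sub_le (μ := μ) (F := F) hU hρ hPU hx₀ (htP j hj)
  refine ⟨(∑ j ∈ t, (n j + 2)) * ρ.toNNReal, t.card * (μ (ball 0 ρ)).toNNReal,
    fun v hv hvm hvi => ?_⟩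
  set D := ENNReal.ofReal ρ * ∫⁻ x in U, ‖fderiv ℝ v x‖ₑ ∂μ
  set a := ballAverage μ v ρ
  have hB0 : μ (ball 0 ρ) ≠ 0 := (measure_ball_pos μ 0 hρ).ne'
  have hball : ∀ j ∈ t,
      ∫⁻ w in ball j ρ, ‖v w‖ₑ ∂μ ≤ (n j + 2) * D + μ (ball 0 ρ) * ‖a x₀‖ₑ := by
    intro j hj
    have haj : ‖a j‖ₑ ≤ ‖a x₀‖ₑ + n j * ((μ (ball 0 ρ))⁻¹ * D) :=
      calc ‖a j‖ₑ = ‖a x₀ + (a j - a x₀)‖ₑ := by rw [add_sub_cancel]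
        _ ≤ ‖a x₀‖ₑ + ‖a j - a x₀‖ₑ := enorm_add_le _ _
        _ ≤ _ := add_le_add le_rfl (hn j hj v hv hvi)
    calc ∫⁻ w in ball j ρ, ‖v w‖ₑ ∂μ ≤ 2 * D + μ (ball 0 ρ) * ‖a j‖ₑ :=
          setLIntegral_ball_enorm_le hU hv hvm hvi hρ (hPU j (htP j hj))
      _ ≤ 2 * D + μ (ball 0 ρ) * (‖a x₀‖ₑ + n j * ((μ (ball 0 ρ))⁻¹ * D)) := by gcongr
      _ = 2 * D + μ (ball 0 ρ) * ‖a x₀‖ₑ + n j * (μ (ball 0 ρ) * (μ (ball 0 ρ))⁻¹ * D) := by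
          ring
      _ = (n j + 2) * D + μ (ball 0 ρ) * ‖a x₀‖ₑ := by
          rw [ENNReal.mul_inv_cancel hB0 measure_ball_lt_top.ne, one_mul]
          ring
  calc ∫⁻ x in P, ‖v x‖ₑ ∂μ ≤ ∫⁻ x in ⋃ j ∈ t, ball j ρ, ‖v x‖ₑ ∂μ := lintegral_mono_set hPt
    _ ≤ ∑ j ∈ t, ∫⁻ x in ball j ρ, ‖v x‖ₑ ∂μ := lintegral_biUnion_finset_le _ _ _
    _ ≤ ∑ j ∈ t, ((n j + 2) * D + μ (ball 0 ρ) * ‖a x₀‖ₑ) := Finset.sum_le_sum hball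
    _ = _ := by
        rw [Finset.sum_add_distrib, ← Finset.sum_mul, Finset.sum_const, nsmul_eq_mul]
        push_cast
        rw [ENNReal.coe_toNNReal measure_ball_lt_top.ne]
        simp only [D, ENNReal.ofReal]
        ring

end BallAverage

section LipschitzCharts

variable {E : Type*} [NormedAddCommGroup E] [InnerProductSpace ℝ E] {u : E}

theorem inner_add_smul_of_norm_eq_one (hu : ‖u‖ = 1) (x : E) (c : ℝ) :
    ⟪x + c • u, u⟫ = ⟪x, u⟫ + c := by
  rw [inner_add_left, real_inner_smul_left, real_inner_self_eq_norm_sq, hu, one_pow, mul_one]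

theorem add_smul_sub_inner_smul_of_norm_eq_one (hu : ‖u‖ = 1) (x : E) (c : ℝ) :
    x + c • u - ⟪x + c • u, u⟫ • u = x - ⟪x, u⟫ • u := by
  rw [inner_add_smul_of_norm_eq_one hu, add_smul]
  abel

theorem dist_add_smul_le_of_norm_eq_one (hu : ‖u‖ = 1) (x p : E) {c : ℝ} (hc : 0 ≤ c) :
    dist (x + c • u) p ≤ dist x p + c := by
  rw [dist_eq_norm, dist_eq_norm, add_sub_right_comm]
  exact (norm_add_le _ _).trans_eq (by rw [norm_smul, hu, mul_one, Real.norm_of_nonneg hc])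

theorem exists_isCompact_translate_mem_of_chart [FiniteDimensional ℝ E] {ω : Set E} {p : E}
    (hu : ‖u‖ = 1) {φ : E → ℝ} (hφ : Continuous φ) {r : ℝ} (hr : 0 < r)
    (hchart : ∀ x ∈ ball p r, (x ∈ ω ↔ φ (x - ⟪x, u⟫ • u) < ⟪x, u⟫)) :
    ∃ T : Set E, IsCompact T ∧ T ⊆ ω ∧ ∀ x ∈ ω ∩ ball p (r / 4),
      (∀ s ∈ Icc (0 : ℝ) 1, x + s • ((r / 4) • u) ∈ ω) ∧ x + (r / 4) • u ∈ T := by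
  refine ⟨closedBall p (r / 2) ∩ {x | φ (x - ⟪x, u⟫ • u) + r / 4 ≤ ⟪x, u⟫},
    (isCompact_closedBall _ _).inter_right (isClosed_le (by fun_prop) (by fun_prop)), ?_, ?_⟩
  · rintro x ⟨hxp, hx⟩
    exact (hchart x (closedBall_subset_ball (by linarith) hxp)).2 (by linarith [hx.out])
  rintro x ⟨hxω, hxp⟩
  have hxφ := (hchart x (ball_subset_ball (by linarith) hxp)).1 hxω
  rw [mem_ball] at hxp
  refine ⟨fun s hs => ?_, ?_, ?_⟩
  · have hc : 0 ≤ s * (r / 4) := mul_nonneg hs.1 (by linarith)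
    rw [smul_smul]
    refine (hchart _ ?_).2 ?_
    · rw [mem_ball]
      have := dist_add_smul_le_of_norm_eq_one hu x p hc
      nlinarith [hs.2]
    · rw [add_smul_sub_inner_smul_of_norm_eq_one hu, inner_add_smul_of_norm_eq_one hu]
      linarith
  · rw [mem_closedBall]
    linarith [dist_add_smul_le_of_norm_eq_one hu x p (c := r / 4) (by linarith)]
  · rw [mem_ofPred_eq, add_smul_sub_inner_smul_of_norm_eq_one hu, inner_add_smul_of_norm_eq_one hu]
    linarith

end LipschitzCharts

theorem LipschitzBoundary.exists_isCompact_translate_cover {m : ℕ}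
    {ω : Set (EuclideanSpace ℝ (Fin m))} (hωo : IsOpen ω) (hωb : Bornology.IsBounded ω)
    (hωl : LipschitzBoundary ω) :
    ∃ (K : Set (EuclideanSpace ℝ (Fin m))) (t : Finset (EuclideanSpace ℝ (Fin m)))
      (S : EuclideanSpace ℝ (Fin m) → Set (EuclideanSpace ℝ (Fin m)))
      (b : EuclideanSpace ℝ (Fin m) → EuclideanSpace ℝ (Fin m)),
      IsCompact K ∧ K ⊆ ω ∧ (∀ i ∈ t, MeasurableSet (S i)) ∧ ω ⊆ K ∪ ⋃ i ∈ t, S i ∧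
      (∀ i ∈ t, ∀ w ∈ S i, ∀ s ∈ Icc (0 : ℝ) 1, w + s • b i ∈ ω) ∧
      ∀ i ∈ t, ∀ w ∈ S i, w + b i ∈ K := by
  choose! u hu φ L r hr hφ hchart using hωl
  choose! T hTc hTω hpush using fun p (hp : p ∈ frontier ω) =>
    exists_isCompact_translate_mem_of_chart (hu p hp) (hφ p hp).continuous (hr p hp) (hchart p hp)
  obtain ⟨t, htf, hft⟩ := (hωb.isCompact_closure.of_isClosed_subset isClosed_frontier
    frontier_subset_closure).elim_nhds_subcover (fun p => ball p (r p / 4))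
    fun p hp => ball_mem_nhds p (by linarith [hr p hp])
  set K₀ := ω \ ⋃ p ∈ t, ball p (r p / 4)
  have hK₀ : closure K₀ ⊆ ω := fun x hx => by
    by_contra hxω
    have hxf : x ∈ frontier ω := ⟨closure_mono sdiff_subset hx, by rwa [hωo.interior_eq]⟩
    exact closure_minimal (fun y hy => hy.2)
      (isOpen_biUnion fun p _ => isOpen_ball).isClosed_compl hx (hft hxf)
  refine ⟨closure K₀ ∪ ⋃ p ∈ t, T p, t, fun p => ω ∩ ball p (r p / 4),
    fun p => (r p / 4) • u p, ?_, ?_, fun p _ => hωo.measurableSet.inter measurableSet_ball,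
    ?_, fun p hp w hw => (hpush p (htf p hp) w hw).1,
    fun p hp w hw => Or.inr (mem_iUnion₂.2 ⟨p, hp, (hpush p (htf p hp) w hw).2⟩)⟩
  · exact (hωb.subset sdiff_subset).isCompact_closure.union
      (t.isCompact_biUnion fun p hp => hTc p (htf p hp))
  · exact union_subset hK₀ (iUnion₂_subset fun p hp => hTω p (htf p hp))
  · intro x hx
    by_cases h : x ∈ ⋃ p ∈ t, ball p (r p / 4)
    · obtain ⟨p, hp, hxp⟩ := mem_iUnion₂.1 h
      exact Or.inr (mem_iUnion₂.2 ⟨p, hp, hx, hxp⟩)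
    · exact Or.inl (Or.inl (subset_closure ⟨hx, h⟩))

theorem LipschitzBoundary.exists_setLIntegral_enorm_le {m : ℕ} {F : Type*} [NormedAddCommGroup F]
    [NormedSpace ℝ F] [CompleteSpace F] {ω : Set (EuclideanSpace ℝ (Fin m))} (hωo : IsOpen ω)
    (hωc : IsConnected ω) (hωb : Bornology.IsBounded ω) (hωl : LipschitzBoundary ω) :
    ∃ (x₀ : EuclideanSpace ℝ (Fin m)) (ρ : ℝ) (C₁ C₂ : ℝ≥0), 0 < ρ ∧ ball x₀ (2 * ρ) ⊆ ω ∧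
      ∀ v : EuclideanSpace ℝ (Fin m) → F, DifferentiableOn ℝ v ω → StronglyMeasurable v →
        IntegrableOn v ω → ∫⁻ x in ω, ‖v x‖ₑ
          ≤ C₁ * (∫⁻ x in ω, ‖fderiv ℝ v x‖ₑ) + C₂ * ‖ballAverage volume v ρ x₀‖ₑ := by
  obtain ⟨K, t, S, b, hKc, hKω, hS, hωK, hseg, hSK⟩ :=
    hωl.exists_isCompact_translate_cover hωo hωb
  obtain ⟨x₀, hx₀⟩ := hωc.nonempty
  obtain ⟨P, hPc, hPp, hKP, hPω, hx₀P⟩ :=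
    hωo.exists_isCompact_isPreconnected_superset hωc hKc hKω hx₀
  obtain ⟨δ, hδ, hδω⟩ := hPc.exists_cthickening_subset_open hωo hPω
  have hPU : ∀ x ∈ P, ball x (2 * (δ / 2)) ⊆ ω := fun x hx => by
    rw [mul_div_cancel₀ δ two_ne_zero]
    exact (ball_subset_thickening hx δ).trans ((thickening_subset_cthickening δ P).trans hδω)
  obtain ⟨C₁, C₂, hC⟩ := exists_setLIntegral_enorm_le_of_isPreconnected (μ := volume) (F := F)
    hωo hPc hPp (half_pos hδ) hPU hx₀P
  refine ⟨x₀, δ / 2, ∑ i ∈ t, ‖b i‖₊ + (t.card + 1) * C₁, (t.card + 1) * C₂, half_pos hδ,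
    hPU x₀ hx₀P, fun v hv hvm hvi => ?_⟩
  calc ∫⁻ x in ω, ‖v x‖ₑ
      ≤ (∑ i ∈ t, ‖b i‖ₑ) * (∫⁻ x in ω, ‖fderiv ℝ v x‖ₑ) + (t.card + 1) * ∫⁻ x in K, ‖v x‖ₑ :=
        setLIntegral_enorm_le_of_subset_union (μ := volume) hωo hv hvm
          hKc.measurableSet hS hωK hseg hSK
    _ ≤ (∑ i ∈ t, ‖b i‖ₑ) * (∫⁻ x in ω, ‖fderiv ℝ v x‖ₑ) + (t.card + 1) *
          (C₁ * (∫⁻ x in ω, ‖fderiv ℝ v x‖ₑ) + C₂ * ‖ballAverage volume v (δ / 2) x₀‖ₑ) := by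
        gcongr
        exact (lintegral_mono_set hKP).trans (hC v hv hvm hvi)
    _ = _ := by
        push_cast
        simp only [enorm_eq_nnnorm]
        ring

theorem DifferentiableOn.exists_measurable_eqOn {E F : Type*} [NormedAddCommGroup E]
    [NormedSpace ℝ E] [MeasurableSpace E] [OpensMeasurableSpace E] [NormedAddCommGroup F]
    [NormedSpace ℝ F] [MeasurableSpace F] [BorelSpace F] {U : Set E} {v : E → F}
    (hU : IsOpen U) (hv : DifferentiableOn ℝ v U) :
    ∃ w : E → F, Measurable w ∧ EqOn w v U ∧ DifferentiableOn ℝ w U ∧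
      ∀ x ∈ U, fderiv ℝ w x = fderivWithin ℝ v U x := by
  classical
  have hwv : EqOn (U.piecewise v 0) v U := piecewise_eqOn U v 0
  refine ⟨U.piecewise v 0, hv.continuousOn.measurable_piecewise continuousOn_const
    hU.measurableSet, hwv, hv.congr hwv, fun x hx => ?_⟩
  rw [fderivWithin_of_isOpen hU hx]
  exact Filter.EventuallyEq.fderiv_eq (eventuallyEq_of_mem (hU.mem_nhds hx) hwv)

theorem exists_enorm_setAverage_le_of_lintegral_lt {m N : ℕ}
    {ω : Set (EuclideanSpace ℝ (Fin m))} (hωo : IsOpen ω) (hωc : IsConnected ω)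
    (hωb : Bornology.IsBounded ω) (hωl : LipschitzBoundary ω)
    {W : EuclideanSpace ℝ (Fin N) → ℝ≥0∞} {c : ℝ≥0∞} (hc0 : c ≠ 0) (hc : c ≠ ⊤) {R : ℝ}
    (hW : ∀ z : EuclideanSpace ℝ (Fin N), R ≤ ‖z‖ → c ≤ W z) :
    ∃ δ M : ℝ≥0∞, δ ≠ 0 ∧ M ≠ ⊤ ∧ ∀ v, MemH1 ω v →
      ∫⁻ x in ω, ((‖fderivWithin ℝ v ω x‖₊ : ℝ≥0∞) ^ 2 + W (v x)) < δ →
        ‖⨍ x in ω, v x‖ₑ ≤ M := by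
  obtain ⟨x₀, ρ, C₁, C₂, hρ, hx₀, hL1⟩ :=
    hωl.exists_setLIntegral_enorm_le (F := EuclideanSpace ℝ (Fin N)) hωo hωc hωb
  set B := volume (ball x₀ ρ)
  have hB2 : B / 2 ≠ 0 := ENNReal.div_ne_zero.2 ⟨(measure_ball_pos _ _ hρ).ne', by simp⟩
  set δ := c * (B / 2)
  set G := δ + volume ω
  refine ⟨δ, (volume ω)⁻¹ * (C₁ * G + C₂ * (ENNReal.ofReal R
      + ((volume (ball (0 : EuclideanSpace ℝ (Fin m)) ρ))⁻¹ + (B / 2)⁻¹) * (ENNReal.ofReal ρ * G))),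
    mul_ne_zero hc0 hB2, ?_, fun v hv hE => ?_⟩
  · have : volume ω ≠ ⊤ := hωb.measure_lt_top.ne
    have : (volume (ball (0 : EuclideanSpace ℝ (Fin m)) ρ))⁻¹ ≠ ⊤ :=
      ENNReal.inv_ne_top.2 (measure_ball_pos _ _ hρ).ne'
    have : (volume ω)⁻¹ ≠ ⊤ := ENNReal.inv_ne_top.2 (hωo.measure_pos _ hωc.nonempty).ne'
    finiteness
  obtain ⟨w, hwm, hwv, hwd, hwfd⟩ := hv.1.exists_measurable_eqOn hωo
  have hwi : IntegrableOn w ω := hv.2.1.congr_fun hwv.symm hωo.measurableSet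
  have hG : ∫⁻ x in ω, ‖fderiv ℝ w x‖ₑ ≤ G := by
    refine (setLIntegral_congr_fun hωo.measurableSet fun x hx => by rw [hwfd x hx]).trans_le
      ((setLIntegral_le_setLIntegral_sq_add ω _ fun x => W (v x)).trans ?_)
    simpa only [enorm_eq_nnnorm] using add_le_add_left hE.le _
  have hBω : ball x₀ ρ ⊆ ω := (ball_subset_ball (by linarith)).trans hx₀
  have hWw : ∫⁻ x in ball x₀ ρ, W (w x) < δ :=
    calc ∫⁻ x in ball x₀ ρ, W (w x) = ∫⁻ x in ball x₀ ρ, W (v x) :=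
          setLIntegral_congr_fun measurableSet_ball fun x hx => by rw [hwv (hBω hx)]
      _ ≤ ∫⁻ x in ω, ((‖fderivWithin ℝ v ω x‖₊ : ℝ≥0∞) ^ 2 + W (v x)) :=
          (lintegral_mono_set hBω).trans (lintegral_mono fun x => le_add_self)
      _ < δ := hE
  calc ‖⨍ x in ω, v x‖ₑ = ‖⨍ x in ω, w x‖ₑ := by
        rw [setAverage_congr_fun hωo.measurableSet (ae_of_all _ fun x hx => (hwv hx).symm)]
    _ ≤ (volume ω)⁻¹ * ∫⁻ x in ω, ‖w x‖ₑ := enorm_setAverage_le _ _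
    _ ≤ _ := by
        gcongr
        refine (hL1 w hwd hwm.stronglyMeasurable hwi).trans ?_
        gcongr
        exact (enorm_ballAverage_le_of_lintegral_lt hωo hwd hwm.stronglyMeasurable hwi hρ hx₀
          hc0 hc hW hWw).trans (by gcongr)

theorem Vavg_liminf_pos_general {m N : ℕ} (ω : Set (EuclideanSpace ℝ (Fin m)))
    (hωo : IsOpen ω) (hωc : IsConnected ω) (hωb : Bornology.IsBounded ω)
    (hωl : LipschitzBoundary ω)
    (W : EuclideanSpace ℝ (Fin N) → ℝ≥0∞)
    (hH2 : ∃ c : ℝ≥0∞, 0 < c ∧ ∃ R : ℝ, ∀ z : EuclideanSpace ℝ (Fin N), R ≤ ‖z‖ → c ≤ W z) :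
    ∃ c : ℝ≥0∞, 0 < c ∧ ∃ R : ℝ,
      ∀ z : EuclideanSpace ℝ (Fin N), R ≤ ‖z‖ → c ≤ Vavg W ω z := by
  obtain ⟨c, hc, R, hW⟩ := hH2
  -- (H2) allows `c = ⊤`; the level `min c 1` is finite.
  obtain ⟨δ, M, hδ, hM, hbound⟩ := exists_enorm_setAverage_le_of_lintegral_lt hωo hωc hωb hωl
    (lt_min hc one_pos).ne' ((min_le_right c 1).trans_lt ENNReal.one_lt_top).ne
    fun z hz => (min_le_left c 1).trans (hW z hz)
  have hω0 : volume ω ≠ 0 := (hωo.measure_pos volume hωc.nonempty).ne'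
  have hωtop : volume ω ≠ ⊤ := hωb.measure_lt_top.ne
  refine ⟨(volume ω)⁻¹ * δ, ENNReal.mul_pos (ENNReal.inv_ne_zero.2 hωtop) hδ, M.toReal + 1,
    fun z hz => le_iInf₂ fun v ⟨hv, hvz⟩ => not_lt.1 fun hlt => ?_⟩
  have hzM : ‖z‖ₑ ≤ M := hvz ▸ hbound v hv
    ((ENNReal.mul_lt_mul_iff_right (ENNReal.inv_ne_zero.2 hωtop) (ENNReal.inv_ne_top.2 hω0)).1 hlt)
  have := ENNReal.toReal_mono hM hzM
  rw [toReal_enorm] at this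
  linarith

/-- The averaged potential satisfies `liminf_{|z|→∞} V(z) > 0`. -/
theorem Vavg_liminf_pos {m N : ℕ} (ω : Set (EuclideanSpace ℝ (Fin m)))
    (hωo : IsOpen ω) (hωc : IsConnected ω) (hωb : Bornology.IsBounded ω)
    (hωl : LipschitzBoundary ω)
    (W : EuclideanSpace ℝ (Fin N) → ℝ≥0∞) (hlsc : LowerSemicontinuous W)
    (hH2 : ∃ c : ℝ≥0∞, 0 < c ∧ ∃ R : ℝ, ∀ z : EuclideanSpace ℝ (Fin N), R ≤ ‖z‖ → c ≤ W z) :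
    ∃ c : ℝ≥0∞, 0 < c ∧ ∃ R : ℝ,
      ∀ z : EuclideanSpace ℝ (Fin N), R ≤ ‖z‖ → c ≤ Vavg W ω z :=
  Vavg_liminf_pos_general ω hωo hωc hωb hωl W hH2
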